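/- Let Γ be a real symmetric N×N matrix with Γ_{jl} > 0 for j ≠ l, rows summing to zero, and let P(z) = exp(Γz)P₀ for P₀ ∈ ℝ^N with nonnegative entries and Σ_j (P₀)_j = R². Then P_j(z) → R²/N as z → ∞ for every j, and there exist constants C > 0 and Λ₂ < 0 (the second largest eigenvalue of Γ) such that sup_j |P_j(z) − R²/N| ≤ C e^{Λ₂ z} for all z ≥ 0. -/

import Mathlib

/-!
Since `Γ` is symmetric with zero row sums, `2 ⟪v, Γ v⟫ = -∑ j l, Γ j l (v j - v l)²`. Hence `Γ` is
negative semidefinite and, its off-diagonal entries being positive, its kernel is spanned by the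
constant vector. In an orthonormal eigenbasis `(u k)` of `Γ`,
`exp (z Γ) P₀ = ∑ k, e^{z λ k} ⟪u k, P₀⟫ u k`: the term of the simple eigenvalue `0` is the average
`(∑ j, P₀ j) / N = R² / N`, and all other terms decay like `e^{Λ₂ z}`, where `Λ₂ < 0` is the largest
of the remaining eigenvalues.
-/

open Matrix Filter

namespace Matrix

variable {ι : Type*} [Fintype ι] [DecidableEq ι]

theorem exp_mulVec_of_mulVec_eq_smul {A : Matrix ι ι ℝ} {v : ι → ℝ} {μ : ℝ}
    (h : A *ᵥ v = μ • v) : NormedSpace.exp A *ᵥ v = Real.exp μ • v := by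
  -- `NormedSpace.exp` depends only on the topology, so any algebra norm may be used to sum it.
  let : NormedRing (Matrix ι ι ℝ) := Matrix.linftyOpNormedRing
  let : NormedAlgebra ℝ (Matrix ι ι ℝ) := Matrix.linftyOpNormedAlgebra
  have hpow (n : ℕ) : A ^ n *ᵥ v = μ ^ n • v := by
    induction n with
    | zero => simp
    | succ n ih => rw [pow_succ, ← mulVec_mulVec, h, mulVec_smul, ih, smul_smul, ← pow_succ']
  have hA := (NormedSpace.exp_series_hasSum_exp' (𝕂 := ℝ) A).map ((mulVecBilin ℝ ℝ).flip v)
    (continuous_id.matrix_mulVec continuous_const)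
  have hμ := (NormedSpace.exp_series_hasSum_exp' (𝕂 := ℝ) μ).smul_const v
  rw [Real.exp_eq_exp_ℝ]
  refine hA.unique ?_
  convert hμ using 2 with n
  simp [hpow, smul_smul]

end Matrix

namespace OrthonormalBasis

variable {ι κ : Type*} [Fintype ι] [Fintype κ] (b : OrthonormalBasis κ ℝ (EuclideanSpace ℝ ι))

theorem dotProduct_ofLp [DecidableEq κ] (k l : κ) :
    ⇑(b k) ⬝ᵥ ⇑(b l) = if k = l then 1 else 0 := by
  simpa [EuclideanSpace.inner_eq_star_dotProduct, dotProduct_comm] using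
    orthonormal_iff_ite.mp b.orthonormal k l

theorem sum_dotProduct_smul_ofLp (w : ι → ℝ) : ∑ k, (⇑(b k) ⬝ᵥ w) • ⇑(b k) = w := by
  simpa [EuclideanSpace.inner_eq_star_dotProduct, dotProduct_comm] using
    congrArg WithLp.ofLp (b.sum_repr' (WithLp.toLp 2 w))

theorem abs_ofLp_apply_le_one (k : κ) (j : ι) : |b k j| ≤ 1 := by
  simpa [b.orthonormal.1 k] using PiLp.norm_apply_le (b k) j

end OrthonormalBasis

section ConstantVector

variable {ι : Type*} [Fintype ι] {u w : ι → ℝ}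

theorem dotProduct_sq_of_const (hu : ∀ j l, u j = u l) (hw : ∀ j l, w j = w l) :
    (u ⬝ᵥ w) ^ 2 = (u ⬝ᵥ u) * (w ⬝ᵥ w) := by
  rcases isEmpty_or_nonempty ι with _ | ⟨⟨j⟩⟩
  · simp [dotProduct]
  simp only [dotProduct, hu _ j, hw _ j, Finset.sum_const, Finset.card_univ, nsmul_eq_mul]
  ring

theorem dotProduct_mul_apply_of_const (hu : ∀ j l, u j = u l) (hu1 : u ⬝ᵥ u = 1) (j : ι) :
    (u ⬝ᵥ w) * u j = (∑ i, w i) / Fintype.card ι := by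
  simp only [dotProduct, hu _ j, Finset.sum_const, Finset.card_univ, nsmul_eq_mul] at hu1 ⊢
  rw [← Finset.mul_sum, eq_div_iff (by rintro h; simp [h] at hu1)]
  linear_combination (∑ i, w i) * hu1

end ConstantVector

namespace Matrix.IsHermitian

variable {ι : Type*} [Fintype ι] [DecidableEq ι] {A : Matrix ι ι ℝ} (hA : A.IsHermitian)

theorem exp_smul_mulVec (z : ℝ) (w : ι → ℝ) :
    NormedSpace.exp (z • A) *ᵥ w =
      ∑ k, (Real.exp (z * hA.eigenvalues k) * (⇑(hA.eigenvectorBasis k) ⬝ᵥ w)) •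
        ⇑(hA.eigenvectorBasis k) := by
  conv_lhs => rw [← hA.eigenvectorBasis.sum_dotProduct_smul_ofLp w]
  simp only [mulVec_sum, mulVec_smul, mul_comm (Real.exp _), ← smul_smul]
  congr! 2 with k
  exact exp_mulVec_of_mulVec_eq_smul (by rw [smul_mulVec, hA.mulVec_eigenvectorBasis, smul_smul])

theorem exists_eigenvalues_eq {v : ι → ℝ} {μ : ℝ} (hv : v ≠ 0) (h : A *ᵥ v = μ • v) :
    ∃ k, hA.eigenvalues k = μ := by
  rw [← Set.mem_range, ← hA.spectrum_real_eq_range_eigenvalues, spectrum.mem_iff]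
  intro hunit
  refine hv (mulVec_injective_iff_isUnit.mpr hunit ?_)
  simp [sub_mulVec, h, Algebra.algebraMap_eq_smul_one, smul_mulVec]

end Matrix.IsHermitian

namespace Matrix

variable {ι : Type*} {Γ : Matrix ι ι ℝ}

theorem mul_sq_sub_nonneg (hoff : ∀ j l, j ≠ l → 0 ≤ Γ j l) (v : ι → ℝ) (j l : ι) :
    0 ≤ Γ j l * (v j - v l) ^ 2 := by
  obtain rfl | hjl := eq_or_ne j l
  · simp
  · exact mul_nonneg (hoff j l hjl) (sq_nonneg _)

variable [Fintype ι]

theorem two_mul_dotProduct_mulVec_self (hsym : Γ.IsSymm) (hrow : ∀ j, ∑ l, Γ j l = 0)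
    (v : ι → ℝ) : 2 * (v ⬝ᵥ Γ *ᵥ v) = -∑ j, ∑ l, Γ j l * (v j - v l) ^ 2 := by
  have hdiag : ∑ j, ∑ l, Γ j l * v j ^ 2 = 0 := by simp [← Finset.sum_mul, hrow]
  have hdiag' : ∑ j, ∑ l, Γ j l * v l ^ 2 = 0 := by
    rw [Finset.sum_comm]
    simp [← hsym.apply, ← Finset.sum_mul, hrow]
  have hcross : v ⬝ᵥ Γ *ᵥ v = ∑ j, ∑ l, Γ j l * v j * v l := by
    simp only [dotProduct, mulVec, Finset.mul_sum]
    exact Finset.sum_congr rfl fun j _ => Finset.sum_congr rfl fun l _ => by ring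
  have hexpand : ∑ j, ∑ l, Γ j l * (v j - v l) ^ 2 =
      ∑ j, ∑ l, Γ j l * v j ^ 2 + ∑ j, ∑ l, Γ j l * v l ^ 2
        - 2 * ∑ j, ∑ l, Γ j l * v j * v l := by
    simp only [Finset.mul_sum, ← Finset.sum_add_distrib, ← Finset.sum_sub_distrib]
    exact Finset.sum_congr rfl fun j _ => Finset.sum_congr rfl fun l _ => by ring
  rw [hexpand, hdiag, hdiag', hcross]
  ring

theorem dotProduct_mulVec_self_nonpos (hsym : Γ.IsSymm) (hrow : ∀ j, ∑ l, Γ j l = 0)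
    (hoff : ∀ j l, j ≠ l → 0 ≤ Γ j l) (v : ι → ℝ) : v ⬝ᵥ Γ *ᵥ v ≤ 0 := by
  have := two_mul_dotProduct_mulVec_self hsym hrow v
  have := Finset.sum_nonneg fun j (_ : j ∈ Finset.univ) =>
    Finset.sum_nonneg fun l (_ : l ∈ Finset.univ) => mul_sq_sub_nonneg hoff v j l
  linarith

theorem apply_eq_apply_of_mulVec_eq_zero (hsym : Γ.IsSymm) (hrow : ∀ j, ∑ l, Γ j l = 0)
    (hoff : ∀ j l, j ≠ l → 0 < Γ j l) {v : ι → ℝ} (hv : Γ *ᵥ v = 0) (j l : ι) : v j = v l := by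
  obtain rfl | hjl := eq_or_ne j l
  · rfl
  have hoff' : ∀ j l, j ≠ l → 0 ≤ Γ j l := fun j l h => (hoff j l h).le
  have hsum : ∑ j, ∑ l, Γ j l * (v j - v l) ^ 2 = 0 := by
    linarith [two_mul_dotProduct_mulVec_self hsym hrow v, show v ⬝ᵥ Γ *ᵥ v = 0 by simp [hv]]
  have hrowsum := congrFun ((Fintype.sum_eq_zero_iff_of_nonneg fun j =>
    Finset.sum_nonneg fun l _ => mul_sq_sub_nonneg hoff' v j l).mp hsum) j
  have hterm := congrFun ((Fintype.sum_eq_zero_iff_of_nonneg fun l =>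
    mul_sq_sub_nonneg hoff' v j l).mp hrowsum) l
  have hsq := (mul_eq_zero.mp hterm).resolve_left (hoff j l hjl).ne'
  exact sub_eq_zero.mp (pow_eq_zero_iff two_ne_zero |>.mp hsq)

end Matrix

namespace Matrix.IsHermitian

variable {ι : Type*} [Fintype ι] [DecidableEq ι] {Γ : Matrix ι ι ℝ} (hH : Γ.IsHermitian)

theorem eigenvalues_nonpos (hrow : ∀ j, ∑ l, Γ j l = 0) (hoff : ∀ j l, j ≠ l → 0 ≤ Γ j l)
    (k : ι) : hH.eigenvalues k ≤ 0 := by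
  have := hH.eigenvalues_eq k
  simp only [star_trivial, RCLike.re_to_real] at this
  rw [this]
  exact dotProduct_mulVec_self_nonpos (isHermitian_iff_isSymm.mp hH) hrow hoff _

theorem eigenvectorBasis_apply_eq_of_eigenvalues_eq_zero (hrow : ∀ j, ∑ l, Γ j l = 0)
    (hoff : ∀ j l, j ≠ l → 0 < Γ j l) {k : ι} (hk : hH.eigenvalues k = 0) (j l : ι) :
    hH.eigenvectorBasis k j = hH.eigenvectorBasis k l :=
  apply_eq_apply_of_mulVec_eq_zero (isHermitian_iff_isSymm.mp hH) hrow hoff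
    (by rw [hH.mulVec_eigenvectorBasis, hk, zero_smul]) j l

theorem existsUnique_eigenvalues_eq_zero [Nonempty ι] (hrow : ∀ j, ∑ l, Γ j l = 0)
    (hoff : ∀ j l, j ≠ l → 0 < Γ j l) : ∃! k, hH.eigenvalues k = 0 := by
  have hdet : Γ.det = 0 := exists_mulVec_eq_zero_iff.mp
    ⟨1, one_ne_zero, funext fun j => by simpa [mulVec, dotProduct] using hrow j⟩
  obtain ⟨k₀, -, hk₀⟩ := Finset.prod_eq_zero_iff.mp (hH.det_eq_prod_eigenvalues ▸ hdet)
  refine ⟨k₀, by exact_mod_cast hk₀, fun k hk => ?_⟩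
  -- Two zero modes would be orthonormal constant vectors, violating Cauchy–Schwarz equality.
  by_contra hne
  have hsq := dotProduct_sq_of_const
    (hH.eigenvectorBasis_apply_eq_of_eigenvalues_eq_zero hrow hoff hk)
    (hH.eigenvectorBasis_apply_eq_of_eigenvalues_eq_zero hrow hoff (k := k₀)
      (by exact_mod_cast hk₀))
  simp [hH.eigenvectorBasis.dotProduct_ofLp, hne] at hsq

theorem exp_smul_mulVec_apply_sub_average (hrow : ∀ j, ∑ l, Γ j l = 0)
    (hoff : ∀ j l, j ≠ l → 0 < Γ j l) {k₀ : ι} (hk₀ : hH.eigenvalues k₀ = 0) (z : ℝ)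
    (w : ι → ℝ) (j : ι) :
    (NormedSpace.exp (z • Γ) *ᵥ w) j - (∑ i, w i) / Fintype.card ι =
      ∑ k ∈ Finset.univ.erase k₀, Real.exp (z * hH.eigenvalues k) *
        (⇑(hH.eigenvectorBasis k) ⬝ᵥ w) * hH.eigenvectorBasis k j := by
  have hconst := dotProduct_mul_apply_of_const (w := w)
    (hH.eigenvectorBasis_apply_eq_of_eigenvalues_eq_zero hrow hoff hk₀)
    (by simp [hH.eigenvectorBasis.dotProduct_ofLp]) j
  rw [hH.exp_smul_mulVec, Finset.sum_apply, ← Finset.add_sum_erase _ _ (Finset.mem_univ k₀)]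
  simp only [hk₀, mul_zero, Real.exp_zero, one_mul, Pi.smul_apply, smul_eq_mul, hconst]
  ring

theorem abs_exp_smul_mulVec_apply_sub_average_le (hrow : ∀ j, ∑ l, Γ j l = 0)
    (hoff : ∀ j l, j ≠ l → 0 < Γ j l) {k₀ : ι} (hk₀ : hH.eigenvalues k₀ = 0) {Λ : ℝ}
    (hΛ : ∀ k ≠ k₀, hH.eigenvalues k ≤ Λ) {z : ℝ} (hz : 0 ≤ z) (w : ι → ℝ) (j : ι) :
    |(NormedSpace.exp (z • Γ) *ᵥ w) j - (∑ i, w i) / Fintype.card ι| ≤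
      (∑ k, |⇑(hH.eigenvectorBasis k) ⬝ᵥ w|) * Real.exp (Λ * z) := by
  rw [hH.exp_smul_mulVec_apply_sub_average hrow hoff hk₀]
  calc _ ≤ ∑ k ∈ Finset.univ.erase k₀,
        |⇑(hH.eigenvectorBasis k) ⬝ᵥ w| * Real.exp (Λ * z) := by
        refine (Finset.abs_sum_le_sum_abs _ _).trans (Finset.sum_le_sum fun k hk => ?_)
        have hexp : Real.exp (z * hH.eigenvalues k) ≤ Real.exp (Λ * z) :=
          Real.exp_le_exp.mpr (by nlinarith [hΛ k (Finset.ne_of_mem_erase hk)])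
        rw [abs_mul, abs_mul, Real.abs_exp, mul_comm (Real.exp _)]
        calc _ ≤ |⇑(hH.eigenvectorBasis k) ⬝ᵥ w| * Real.exp (Λ * z) * 1 := by
              gcongr
              exact hH.eigenvectorBasis.abs_ofLp_apply_le_one k j
          _ = _ := mul_one _
    _ ≤ _ := by
        rw [← Finset.sum_mul]
        gcongr
        exact Finset.erase_subset _ _

end Matrix.IsHermitian

theorem Real.tendsto_of_abs_sub_le_mul_exp {f : ℝ → ℝ} {a C Λ : ℝ} (hΛ : Λ < 0)
    (h : ∀ z ≥ 0, |f z - a| ≤ C * Real.exp (Λ * z)) : Tendsto f atTop (nhds a) := by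
  have hdecay : Tendsto (fun z => C * Real.exp (Λ * z)) atTop (nhds 0) := by
    simpa using (Real.tendsto_exp_atBot.comp
      (tendsto_id.const_mul_atTop_of_neg hΛ)).const_mul C
  refine tendsto_iff_dist_tendsto_zero.mpr
    (squeeze_zero' (.of_forall fun _ => dist_nonneg) ?_ hdecay)
  filter_upwards [eventually_ge_atTop 0] with z hz
  exact h z hz

theorem stmt_10_general (N : ℕ) (hN : 2 ≤ N)
    (Γ : Matrix (Fin N) (Fin N) ℝ) (hsym : Γ.IsSymm)
    (hoff : ∀ j l, j ≠ l → 0 < Γ j l)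
    (hrow : ∀ j, ∑ l, Γ j l = 0)
    (P₀ : Fin N → ℝ)
    (R : ℝ) (hsum : ∑ j, P₀ j = R ^ 2)
    (P : ℝ → Fin N → ℝ)
    (hP : ∀ z, P z = (NormedSpace.exp (z • Γ)).mulVec P₀) :
    (∀ j, Tendsto (fun z => P z j) atTop (nhds (R ^ 2 / N))) ∧
    ∃ C > 0, ∃ Λ₂ < (0 : ℝ),
      (∃ v : Fin N → ℝ, v ≠ 0 ∧ Γ.mulVec v = Λ₂ • v) ∧
      (∀ μ : ℝ, (∃ v : Fin N → ℝ, v ≠ 0 ∧ Γ.mulVec v = μ • v) → μ ≠ 0 → μ ≤ Λ₂) ∧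
      ∀ z ≥ (0 : ℝ), ∀ j, |P z j - R ^ 2 / N| ≤ C * Real.exp (Λ₂ * z) := by
  have hH : Γ.IsHermitian := isHermitian_iff_isSymm.mpr hsym
  have : Nonempty (Fin N) := ⟨⟨0, by omega⟩⟩
  obtain ⟨k₀, hk₀, hk₀_unique⟩ := hH.existsUnique_eigenvalues_eq_zero hrow hoff
  have hne : (Finset.univ.erase k₀).Nonempty := by
    rw [← Finset.card_pos, Finset.card_erase_of_mem (Finset.mem_univ _), Finset.card_univ,
      Fintype.card_fin]
    omega
  obtain ⟨k₂, hk₂, hk₂_max⟩ := Finset.exists_max_image _ hH.eigenvalues hne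
  have hle : ∀ k ≠ k₀, hH.eigenvalues k ≤ hH.eigenvalues k₂ := fun k hk =>
    hk₂_max k (Finset.mem_erase.mpr ⟨hk, Finset.mem_univ k⟩)
  have hΛ₂ : hH.eigenvalues k₂ < 0 :=
    (hH.eigenvalues_nonpos hrow (fun j l h => (hoff j l h).le) k₂).lt_of_ne
      fun h => Finset.ne_of_mem_erase hk₂ (hk₀_unique k₂ h)
  set C := 1 + ∑ k, |⇑(hH.eigenvectorBasis k) ⬝ᵥ P₀|
  have hbound : ∀ z ≥ (0 : ℝ), ∀ j,
      |P z j - R ^ 2 / N| ≤ C * Real.exp (hH.eigenvalues k₂ * z) := by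
    intro z hz j
    have := hH.abs_exp_smul_mulVec_apply_sub_average_le hrow hoff hk₀ hle hz P₀ j
    rw [hsum, Fintype.card_fin, ← hP] at this
    exact this.trans (by gcongr; linarith)
  refine ⟨fun j => Real.tendsto_of_abs_sub_le_mul_exp hΛ₂ fun z hz => hbound z hz j,
    C, by positivity, _, hΛ₂,
    ⟨hH.eigenvectorBasis k₂, fun h => ?_, hH.mulVec_eigenvectorBasis k₂⟩, ?_, hbound⟩
  · simpa [h] using hH.eigenvectorBasis.dotProduct_ofLp k₂ k₂
  · rintro μ ⟨v, hv, hμv⟩ hμ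
    obtain ⟨k, rfl⟩ := hH.exists_eigenvalues_eq hv hμv
    exact hle k fun hk => hμ (hk ▸ hk₀)

/-- Exponential convergence to equipartition for P(z) = exp(Γz)P₀. -/
theorem stmt_10 (N : ℕ) (hN : 2 ≤ N)
    (Γ : Matrix (Fin N) (Fin N) ℝ) (hsym : Γ.IsSymm)
    (hoff : ∀ j l, j ≠ l → 0 < Γ j l)
    (hrow : ∀ j, ∑ l, Γ j l = 0)
    (P₀ : Fin N → ℝ) (hP₀ : ∀ j, 0 ≤ P₀ j)
    (R : ℝ) (hR : 0 < R) (hsum : ∑ j, P₀ j = R ^ 2)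
    (P : ℝ → Fin N → ℝ)
    (hP : ∀ z, P z = (NormedSpace.exp (z • Γ)).mulVec P₀) :
    (∀ j, Tendsto (fun z => P z j) atTop (nhds (R ^ 2 / N))) ∧
    ∃ C > 0, ∃ Λ₂ < (0 : ℝ),
      (∃ v : Fin N → ℝ, v ≠ 0 ∧ Γ.mulVec v = Λ₂ • v) ∧
      (∀ μ : ℝ, (∃ v : Fin N → ℝ, v ≠ 0 ∧ Γ.mulVec v = μ • v) → μ ≠ 0 → μ ≤ Λ₂) ∧
      ∀ z ≥ (0 : ℝ), ∀ j, |P z j - R ^ 2 / N| ≤ C * Real.exp (Λ₂ * z) :=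
  stmt_10_general N hN Γ hsym hoff hrow P₀ R hsum P hP
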